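/- arXiv:2002.11010 — 3 statements merged into one kernel-verified Lean document; each statement's English description precedes it below -/
import Mathlib

section
/- Let k be a field and R = ⊕_{d∈ℕ} R_d a commutative ℕ-graded k-algebra with R₊ := ⊕_{d>0} R_d ≠ 0. If every finite-order k-linear differential operator on R that is homogeneous of some negative degree is zero, then δ(R₊) ⊆ R₊ for every finite-order differential operator δ on R; hence R₊ is a nonzero proper additive subgroup of R stable under all differential operators and R is not a simple D_{R/k}-module. Consequently, if R is a simple D_{R/k}-module, then there exist an integer e < 0 and a nonzero finite-order differential operator on R that is homogeneous of degree e. -/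
open MvPolynomial

/-- A `k`-linear map `δ : R → R` is a differential operator of order at most `n`:
order `≤ 0` means `δ (r * s) = r * δ s` for all `r s`, and order `≤ n + 1` means all
commutators `[δ, μ_r]` with multiplication operators have order `≤ n`. -/
def IsDiffOpOfOrder (k : Type*) {R : Type*} [CommRing k] [CommRing R] [Algebra k R] :
    ℕ → (R →ₗ[k] R) → Prop
  | 0 => fun δ => ∀ r s : R, δ (r * s) = r * δ s
  | n + 1 => fun δ => ∀ r : R,
      IsDiffOpOfOrder k n (δ ∘ₗ LinearMap.mulLeft k r - LinearMap.mulLeft k r ∘ₗ δ)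

/-- `δ` is homogeneous of degree `e ∈ ℤ` with respect to the grading `𝒜`: it sends
elements of degree `d` to elements of degree `d + e`, interpreted as `0` when `d + e < 0`. -/
def HomogeneousOfDegree {k R : Type*} [CommRing k] [CommRing R] [Algebra k R]
    (𝒜 : ℕ → Submodule k R) (δ : R →ₗ[k] R) (e : ℤ) : Prop :=
  ∀ (d : ℕ), ∀ r ∈ 𝒜 d,
    (∀ m : ℕ, (m : ℤ) = (d : ℤ) + e → δ r ∈ 𝒜 m) ∧ ((d : ℤ) + e < 0 → δ r = 0)

/-- The grading induced on a quotient of a polynomial ring by a (homogeneous) ideal: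
the degree-`d` piece is the image of the degree-`d` homogeneous polynomials. -/
noncomputable def quotGrade {σ : Type*} (k : Type*) [CommRing k]
    (I : Ideal (MvPolynomial σ k)) (d : ℕ) : Submodule k (MvPolynomial σ k ⧸ I) :=
  (MvPolynomial.homogeneousSubmodule σ k d).map (Ideal.Quotient.mkₐ k I).toLinearMap

/-! Every linear operator `δ` on `R` splits into homogeneous components `δₑ`, and each `δₑ` is
a differential operator of the same order as `δ`, because `[δₑ, r] = [δ, r]ₑ₊ₐ` for `r` of
degree `a`. For `x` of positive degree `d`, the degree-`0` part of `δ x` is `δ₋d x`, which vanishes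
when all negative-degree differential operators do. Hence `δ` preserves `R₊ = ker (R → R₀)`,
which is a nonzero proper subgroup since `1 ∉ R₊`. -/

open DirectSum GradedAlgebra HomogeneousIdeal LinearMap

section DiffOp

variable {k R : Type*} [CommRing k] [CommRing R] [Algebra k R]

def mulLeftCommutator (δ : R →ₗ[k] R) (r : R) : R →ₗ[k] R :=
  δ ∘ₗ mulLeft k r - mulLeft k r ∘ₗ δ

@[simp]
theorem mulLeftCommutator_apply (δ : R →ₗ[k] R) (r x : R) :
    mulLeftCommutator δ r x = δ (r * x) - r * δ x :=
  rfl

theorem mulLeftCommutator_zero_left (r : R) : mulLeftCommutator (0 : R →ₗ[k] R) r = 0 := by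
  ext; simp

theorem mulLeftCommutator_zero_right (δ : R →ₗ[k] R) : mulLeftCommutator δ 0 = 0 := by
  ext; simp

theorem mulLeftCommutator_add_left (δ δ' : R →ₗ[k] R) (r : R) :
    mulLeftCommutator (δ + δ') r = mulLeftCommutator δ r + mulLeftCommutator δ' r := by
  ext; simp only [mulLeftCommutator_apply, LinearMap.add_apply]; ring

theorem mulLeftCommutator_add_right (δ : R →ₗ[k] R) (r s : R) :
    mulLeftCommutator δ (r + s) = mulLeftCommutator δ r + mulLeftCommutator δ s := by
  ext; simp only [mulLeftCommutator_apply, add_mul, map_add, LinearMap.add_apply]; abel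

theorem isDiffOpOfOrder_zero_iff {δ : R →ₗ[k] R} :
    IsDiffOpOfOrder k 0 δ ↔ ∀ r, mulLeftCommutator δ r = 0 := by
  simp only [IsDiffOpOfOrder, LinearMap.ext_iff, mulLeftCommutator_apply, LinearMap.zero_apply,
    sub_eq_zero]

theorem isDiffOpOfOrder_succ_iff {n : ℕ} {δ : R →ₗ[k] R} :
    IsDiffOpOfOrder k (n + 1) δ ↔ ∀ r, IsDiffOpOfOrder k n (mulLeftCommutator δ r) :=
  Iff.rfl

theorem isDiffOpOfOrder_zero : ∀ n : ℕ, IsDiffOpOfOrder k n (0 : R →ₗ[k] R)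
  | 0 => isDiffOpOfOrder_zero_iff.mpr mulLeftCommutator_zero_left
  | n + 1 => isDiffOpOfOrder_succ_iff.mpr fun r => by
    rw [mulLeftCommutator_zero_left]
    exact isDiffOpOfOrder_zero n

theorem IsDiffOpOfOrder.add : ∀ {n : ℕ} {δ δ' : R →ₗ[k] R},
    IsDiffOpOfOrder k n δ → IsDiffOpOfOrder k n δ' → IsDiffOpOfOrder k n (δ + δ')
  | 0, _, _, h, h' => isDiffOpOfOrder_zero_iff.mpr fun r => by
    rw [mulLeftCommutator_add_left, isDiffOpOfOrder_zero_iff.mp h r,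
      isDiffOpOfOrder_zero_iff.mp h' r, add_zero]
  | _ + 1, _, _, h, h' => isDiffOpOfOrder_succ_iff.mpr fun r => by
    rw [mulLeftCommutator_add_left]
    exact (h r).add (h' r)

end DiffOp

section Graded

variable {k R : Type*} [CommRing k] [CommRing R] [Algebra k R]
  (𝒜 : ℕ → Submodule k R) [GradedAlgebra 𝒜]

noncomputable def intProj (j : ℤ) : R →ₗ[k] R :=
  if 0 ≤ j then proj 𝒜 j.toNat else 0

theorem intProj_natCast (d : ℕ) : intProj 𝒜 d = proj 𝒜 d := by
  simp [intProj]

theorem intProj_of_neg {j : ℤ} (hj : j < 0) : intProj 𝒜 j = 0 :=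
  if_neg hj.not_ge

theorem intProj_mem {j : ℤ} {m : ℕ} (hm : (m : ℤ) = j) (x : R) : intProj 𝒜 j x ∈ 𝒜 m := by
  rw [← hm, intProj_natCast, GradedAlgebra.proj_apply]
  exact SetLike.coe_mem _

theorem intProj_mul_of_mem {a : ℕ} {r : R} (hr : r ∈ 𝒜 a) (x : R) (j : ℤ) :
    intProj 𝒜 j (r * x) = r * intProj 𝒜 (j - a) x := by
  rcases lt_or_ge j a with hj | hj
  · rw [intProj_of_neg 𝒜 (show j - a < 0 by omega), LinearMap.zero_apply, mul_zero]
    rcases lt_or_ge j 0 with hj0 | hj0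
    · rw [intProj_of_neg 𝒜 hj0, LinearMap.zero_apply]
    · lift j to ℕ using hj0
      rw [intProj_natCast, GradedAlgebra.proj_apply,
        coe_decompose_mul_of_left_mem_of_not_le 𝒜 hr (by omega)]
  · lift j to ℕ using (by omega)
    rw [intProj_natCast, GradedAlgebra.proj_apply,
      coe_decompose_mul_of_left_mem_of_le 𝒜 hr (by omega), ← Nat.cast_sub (by omega),
      intProj_natCast, GradedAlgebra.proj_apply]

noncomputable def degreeComponent (e : ℤ) (δ : R →ₗ[k] R) : R →ₗ[k] R :=
  toModule k ℕ R (fun d => intProj 𝒜 (d + e) ∘ₗ δ ∘ₗ (𝒜 d).subtype) ∘ₗ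
    (decomposeLinearEquiv 𝒜).toLinearMap

theorem degreeComponent_apply_of_mem {d : ℕ} {x : R} (hx : x ∈ 𝒜 d) (e : ℤ)
    (δ : R →ₗ[k] R) : degreeComponent 𝒜 e δ x = intProj 𝒜 (d + e) (δ x) := by
  simp [degreeComponent, decomposeLinearEquiv_apply, decompose_of_mem 𝒜 hx, ← lof_eq_of k]

theorem homogeneousOfDegree_degreeComponent (e : ℤ) (δ : R →ₗ[k] R) :
    HomogeneousOfDegree 𝒜 (degreeComponent 𝒜 e δ) e := fun d x hx => by
  rw [degreeComponent_apply_of_mem 𝒜 hx]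
  exact ⟨fun m hm => intProj_mem 𝒜 hm _, fun h => by simp [intProj_of_neg 𝒜 h]⟩

theorem degreeComponent_zero (e : ℤ) : degreeComponent 𝒜 e (0 : R →ₗ[k] R) = 0 :=
  decompose_lhom_ext 𝒜 fun _ => LinearMap.ext fun ⟨_, hx⟩ => by
    simp [degreeComponent_apply_of_mem 𝒜 hx]

theorem mulLeftCommutator_degreeComponent {a : ℕ} {r : R} (hr : r ∈ 𝒜 a) (e : ℤ)
    (δ : R →ₗ[k] R) :
    mulLeftCommutator (degreeComponent 𝒜 e δ) r =
      degreeComponent 𝒜 (e + a) (mulLeftCommutator δ r) := by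
  refine decompose_lhom_ext 𝒜 fun d => LinearMap.ext fun ⟨x, hx⟩ => ?_
  simp only [comp_apply, Submodule.subtype_apply, mulLeftCommutator_apply,
    degreeComponent_apply_of_mem 𝒜 hx,
    degreeComponent_apply_of_mem 𝒜 (SetLike.mul_mem_graded hr hx), map_sub,
    intProj_mul_of_mem 𝒜 hr]
  rw [show ((a + d : ℕ) : ℤ) + e = d + (e + a) by push_cast; ring,
    show (d : ℤ) + (e + a) - a = d + e by ring]

theorem forall_mulLeftCommutator_of_homogeneous {C : (R →ₗ[k] R) → Prop} (h0 : C 0)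
    (hadd : ∀ f g, C f → C g → C (f + g)) {δ : R →ₗ[k] R}
    (hδ : ∀ a, ∀ r ∈ 𝒜 a, C (mulLeftCommutator δ r)) (r : R) : C (mulLeftCommutator δ r) := by
  induction r using DirectSum.Decomposition.inductionOn 𝒜 with
  | zero => rwa [mulLeftCommutator_zero_right]
  | homogeneous r => exact hδ _ _ r.2
  | add r s hr hs => rw [mulLeftCommutator_add_right]; exact hadd _ _ hr hs

theorem IsDiffOpOfOrder.degreeComponent : ∀ {n : ℕ} {δ : R →ₗ[k] R},
    IsDiffOpOfOrder k n δ → ∀ e, IsDiffOpOfOrder k n (degreeComponent 𝒜 e δ)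
  | 0, _, hδ, e => isDiffOpOfOrder_zero_iff.mpr <|
    forall_mulLeftCommutator_of_homogeneous 𝒜 (C := (· = 0)) rfl
      (fun _ _ hf hg => by rw [hf, hg, add_zero]) fun _ r hr => by
        rw [mulLeftCommutator_degreeComponent 𝒜 hr, isDiffOpOfOrder_zero_iff.mp hδ r,
          degreeComponent_zero]
  | n + 1, _, hδ, e => isDiffOpOfOrder_succ_iff.mpr <|
    forall_mulLeftCommutator_of_homogeneous 𝒜 (isDiffOpOfOrder_zero n)
      (fun _ _ => IsDiffOpOfOrder.add) fun _ r hr => by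
        rw [mulLeftCommutator_degreeComponent 𝒜 hr]
        exact (hδ r).degreeComponent _

theorem mem_iSup_pos_iff_mem_irrelevant {x : R} : x ∈ ⨆ d : ℕ, ⨆ _ : 0 < d, 𝒜 d ↔ x ∈ 𝒜₊ := by
  show x ∈ (⨆ d : ℕ, ⨆ _ : 0 < d, 𝒜 d).toAddSubmonoid ↔ x ∈ (𝒜₊).toAddSubmonoid
  simp only [Submodule.iSup_toAddSubmonoid, irrelevant_eq_iSup]
  rfl

theorem one_notMem_irrelevant [Nontrivial R] : (1 : R) ∉ 𝒜₊ := fun h =>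
  one_ne_zero ((map_one (GradedRing.projZeroRingHom 𝒜)).symm.trans h)

theorem map_mem_irrelevant_iff_of_mem {d : ℕ} {x : R} (hx : x ∈ 𝒜 d) (δ : R →ₗ[k] R) :
    δ x ∈ 𝒜₊ ↔ degreeComponent 𝒜 (-d) δ x = 0 := by
  rw [mem_irrelevant_iff, degreeComponent_apply_of_mem 𝒜 hx, add_neg_cancel]
  simp [intProj, GradedRing.proj_apply, GradedAlgebra.proj_apply]

theorem map_mem_irrelevant_of_negative_degree_eq_zero
    (H : ∀ e : ℤ, e < 0 → ∀ (n : ℕ) (δ : R →ₗ[k] R), IsDiffOpOfOrder k n δ →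
      HomogeneousOfDegree 𝒜 δ e → δ = 0)
    {n : ℕ} {δ : R →ₗ[k] R} (hδ : IsDiffOpOfOrder k n δ) {x : R} (hx : x ∈ 𝒜₊) : δ x ∈ 𝒜₊ := by
  have : (𝒜₊).toAddSubmonoid ≤ (𝒜₊).toAddSubmonoid.comap δ :=
    (toAddSubmonoid_irrelevant_le 𝒜).mpr fun d hd y hy => by
      have hvanish := H (-d) (by omega) n _ (hδ.degreeComponent 𝒜 _)
        (homogeneousOfDegree_degreeComponent 𝒜 _ _)
      exact (map_mem_irrelevant_iff_of_mem 𝒜 hy δ).mpr (by rw [hvanish, LinearMap.zero_apply])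
  exact this hx

end Graded

/-- let `R` be a commutative ℕ-graded `k`-algebra (`k` a field) with
irrelevant ideal `R₊ = ⊕_{d>0} R_d ≠ 0`.  If every finite-order differential operator
homogeneous of some negative degree vanishes, then every differential operator preserves
`R₊`, so `R₊` is a nonzero proper additive subgroup stable under all differential
operators and `R` is not a simple `D_{R/k}`-module.  Consequently, if `R` is a simple
`D_{R/k}`-module then there is a nonzero finite-order differential operator homogeneous
of some negative degree. -/
theorem negative_degree_diffop_of_D_simple
    {k R : Type*} [Field k] [CommRing R] [Algebra k R]
    (𝒜 : ℕ → Submodule k R) [GradedAlgebra 𝒜]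
    (Rplus : Submodule k R) (hRplus : Rplus = ⨆ d : ℕ, ⨆ _ : 0 < d, 𝒜 d)
    (hne : Rplus ≠ ⊥) :
    ((∀ (e : ℤ), e < 0 → ∀ (n : ℕ) (δ : R →ₗ[k] R), IsDiffOpOfOrder k n δ →
        HomogeneousOfDegree 𝒜 δ e → δ = 0) →
      (∀ (n : ℕ) (δ : R →ₗ[k] R), IsDiffOpOfOrder k n δ → ∀ r ∈ Rplus, δ r ∈ Rplus) ∧
      Rplus.toAddSubgroup ≠ ⊥ ∧ Rplus.toAddSubgroup ≠ ⊤ ∧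
      ¬ (∀ M : AddSubgroup R,
          (∀ (n : ℕ) (δ : R →ₗ[k] R), IsDiffOpOfOrder k n δ → ∀ r ∈ M, δ r ∈ M) →
          M = ⊥ ∨ M = ⊤)) ∧
    ((∀ M : AddSubgroup R,
        (∀ (n : ℕ) (δ : R →ₗ[k] R), IsDiffOpOfOrder k n δ → ∀ r ∈ M, δ r ∈ M) →
        M = ⊥ ∨ M = ⊤) →
      ∃ e : ℤ, e < 0 ∧ ∃ (n : ℕ) (δ : R →ₗ[k] R), δ ≠ 0 ∧ IsDiffOpOfOrder k n δ ∧
        HomogeneousOfDegree 𝒜 δ e) := by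
  have mem_Rplus : ∀ x, x ∈ Rplus ↔ x ∈ 𝒜₊ := fun _ =>
    hRplus ▸ mem_iSup_pos_iff_mem_irrelevant 𝒜
  have hbot : Rplus.toAddSubgroup ≠ ⊥ := by
    rwa [Ne, ← Submodule.bot_toAddSubgroup (R := k), Submodule.toAddSubgroup_inj]
  have htop : Rplus.toAddSubgroup ≠ ⊤ := by
    obtain ⟨x, -, hx⟩ := (Submodule.ne_bot_iff Rplus).mp hne
    have : Nontrivial R := ⟨⟨x, 0, hx⟩⟩
    rw [Ne, Submodule.toAddSubgroup_eq_top]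
    exact fun h => one_notMem_irrelevant 𝒜 ((mem_Rplus 1).mp (h ▸ Submodule.mem_top))
  have stable : (∀ e : ℤ, e < 0 → ∀ (n : ℕ) (δ : R →ₗ[k] R), IsDiffOpOfOrder k n δ →
      HomogeneousOfDegree 𝒜 δ e → δ = 0) →
      ∀ (n : ℕ) (δ : R →ₗ[k] R), IsDiffOpOfOrder k n δ → ∀ r ∈ Rplus, δ r ∈ Rplus :=
    fun H _ _ hδ r hr => (mem_Rplus _).mpr <|
      map_mem_irrelevant_of_negative_degree_eq_zero 𝒜 H hδ ((mem_Rplus r).mp hr)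
  have not_simple H (hsimple : ∀ M : AddSubgroup R,
      (∀ (n : ℕ) (δ : R →ₗ[k] R), IsDiffOpOfOrder k n δ → ∀ r ∈ M, δ r ∈ M) →
      M = ⊥ ∨ M = ⊤) : False :=
    (hsimple Rplus.toAddSubgroup (stable H)).elim hbot htop
  refine ⟨fun H => ⟨stable H, hbot, htop, not_simple H⟩, fun hsimple => ?_⟩
  by_contra! hcon
  exact not_simple (fun e he n δ hδ hhom => by_contra fun h => hcon e he n δ h hδ hhom) hsimple
end

section
/- Let R = ℂ[x,y,z,w]/(x³+y³+z³+w³) with its standard grading. Every ℂ-linear derivation δ : R → R that is homogeneous of some negative degree (i.e., δ(R_d) ⊆ R_{d+e} for all d, for some fixed integer e < 0) is zero. -/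
/-!
A derivation of `R` is determined by its values on the generators `xᵢ`, which have degree `1`.
For `e ≤ -2` these values vanish for degree reasons. For `e = -1` they are constants `aᵢ`, and
applying the derivation to the relation gives `3 ∑ aᵢ xᵢ² = 0` in `R`; since the ideal is
generated by a cubic form it contains no nonzero quadratic form, so every `aᵢ` is zero.
-/

open MvPolynomial

/-- The Fermat cubic cone. -/
noncomputable def cubicIdeal : Ideal (MvPolynomial (Fin 4) ℂ) :=
  Ideal.span {X 0 ^ 3 + X 1 ^ 3 + X 2 ^ 3 + X 3 ^ 3}

/-- `R = ℂ[x,y,z,w]/(x³+y³+z³+w³)`. -/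
abbrev RCubic : Type := MvPolynomial (Fin 4) ℂ ⧸ cubicIdeal

namespace MvPolynomial

variable {k σ : Type*} [CommRing k]

theorem mk_X_mem_quotGrade_one (I : Ideal (MvPolynomial σ k)) (i : σ) :
    Ideal.Quotient.mk I (X i) ∈ quotGrade k I 1 :=
  ⟨X i, (mem_homogeneousSubmodule _ _).2 (isHomogeneous_X _ _), rfl⟩

theorem exists_algebraMap_eq_of_mem_quotGrade_zero {I : Ideal (MvPolynomial σ k)}
    {r : MvPolynomial σ k ⧸ I} (hr : r ∈ quotGrade k I 0) : ∃ a : k, algebraMap k _ a = r := by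
  obtain ⟨p, hp, rfl⟩ := hr
  rw [SetLike.mem_coe, homogeneousSubmodule_zero, Submodule.mem_one] at hp
  obtain ⟨a, rfl⟩ := hp
  exact ⟨a, rfl⟩

theorem eq_zero_of_mem_span_singleton_of_isHomogeneous [IsDomain k]
    {f p : MvPolynomial σ k} {m n : ℕ} (hf : f.IsHomogeneous n) (hp : p.IsHomogeneous m)
    (hmn : m < n) (hmem : p ∈ Ideal.span {f}) : p = 0 := by
  obtain ⟨c, rfl⟩ := Ideal.mem_span_singleton'.1 hmem
  by_contra h
  have hc : c ≠ 0 := left_ne_zero_of_mul h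
  have hf0 : f ≠ 0 := right_ne_zero_of_mul h
  have := totalDegree_mul_of_isDomain hc hf0
  rw [hp.totalDegree h, hf.totalDegree hf0] at this
  omega

theorem _root_.Derivation.eq_zero_of_map_mk_X {I : Ideal (MvPolynomial σ k)}
    (D : Derivation k (MvPolynomial σ k ⧸ I) (MvPolynomial σ k ⧸ I))
    (hX : ∀ i, D (Ideal.Quotient.mk I (X i)) = 0) : D = 0 := by
  let D' : Derivation k (MvPolynomial σ k) (MvPolynomial σ k ⧸ I) :=
    Derivation.mk' (D.toLinearMap ∘ₗ (Ideal.Quotient.mkₐ k I).toLinearMap) fun p q => by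
      change D (Ideal.Quotient.mk I (p * q)) = _
      rw [map_mul, D.leibniz]
      rfl
  have hD' : D' = 0 := derivation_ext (by simpa [D'] using hX)
  ext r
  obtain ⟨p, rfl⟩ := Ideal.Quotient.mk_surjective r
  exact congr($hD' p)

end MvPolynomial

theorem cubicIdeal_eq_span_sum : cubicIdeal = Ideal.span {∑ i, X i ^ 3} := by
  rw [Fin.sum_univ_four]
  rfl

theorem fermatCubic_eq_zero_of_derivation_map_X_eq_algebraMap (D : Derivation ℂ RCubic RCubic)
    (a : Fin 4 → ℂ)
    (ha : ∀ i, D (Ideal.Quotient.mk cubicIdeal (X i)) = algebraMap ℂ RCubic (a i)) :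
    a = 0 := by
  have hrel : Ideal.Quotient.mk cubicIdeal (∑ i, X i ^ 3) = 0 := by
    rw [Ideal.Quotient.eq_zero_iff_mem, cubicIdeal_eq_span_sum]
    exact Ideal.subset_span rfl
  have hmk : Ideal.Quotient.mk cubicIdeal (∑ i, C (3 * a i) * X i ^ 2) = 0 := by
    have := congrArg D hrel
    simp only [map_sum, map_pow, Derivation.leibniz_pow, ha, map_zero] at this
    rw [← this, map_sum]
    refine Finset.sum_congr rfl fun i _ => ?_
    rw [← algebraMap_eq, map_mul, Ideal.Quotient.mk_algebraMap, map_pow, map_mul, map_ofNat,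
      nsmul_eq_mul, smul_eq_mul]
    push_cast
    ring
  have hsum : (∑ i, C (3 * a i) * X i ^ 2 : MvPolynomial (Fin 4) ℂ) = 0 := by
    refine eq_zero_of_mem_span_singleton_of_isHomogeneous
      (IsHomogeneous.sum Finset.univ _ 3 fun i _ => isHomogeneous_X_pow i 3)
      (IsHomogeneous.sum _ _ 2 fun i _ => isHomogeneous_C_mul_X_pow _ i 2) (by norm_num) ?_
    rw [← cubicIdeal_eq_span_sum, ← Ideal.Quotient.eq_zero_iff_mem]
    exact hmk
  ext j
  have hcoeff := congrArg (coeff (Finsupp.single j 2)) hsum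
  simp only [coeff_sum, coeff_C_mul, coeff_X_pow] at hcoeff
  simpa [Finsupp.single_left_inj two_ne_zero] using hcoeff

/-- every ℂ-linear derivation of `R = ℂ[x,y,z,w]/(x³+y³+z³+w³)` that is
homogeneous of some negative degree is zero. -/
theorem no_negative_degree_derivations_fermat_cubic
    (δ : RCubic →ₗ[ℂ] RCubic)
    (hleib : ∀ r s : RCubic, δ (r * s) = r * δ s + s * δ r)
    (e : ℤ) (he : e < 0)
    (hhom : HomogeneousOfDegree (quotGrade ℂ cubicIdeal) δ e) :
    δ = 0 := by
  let D : Derivation ℂ RCubic RCubic := .mk' δ hleib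
  have hhomX := fun i => hhom 1 _ (mk_X_mem_quotGrade_one cubicIdeal i)
  suffices hD : D = 0 from congrArg Derivation.toLinearMap hD
  refine D.eq_zero_of_map_mk_X fun i => ?_
  obtain he | rfl : e < -1 ∨ e = -1 := by omega
  · exact (hhomX i).2 (by omega)
  · choose a ha using fun i =>
      exists_algebraMap_eq_of_mem_quotGrade_zero ((hhomX i).1 0 (by simp))
    have ha0 := fermatCubic_eq_zero_of_derivation_map_X_eq_algebraMap D a fun i => (ha i).symm
    change δ _ = 0
    rw [← ha i, ha0, Pi.zero_apply, map_zero]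
end

section
/- Let k = ℤ/2ℤ and R = k[x₀,x₁,x₂]/(x₀² + x₁x₂) with the ℕ-grading induced from the standard grading of k[x₀,x₁,x₂]. The partial derivative ∂/∂x₀ on k[x₀,x₁,x₂] maps the ideal (x₀² + x₁x₂) into itself (since ∂/∂x₀(x₀² + x₁x₂) = 2x₀ = 0 in characteristic 2) and therefore descends to a well-defined k-linear map δ : R → R. This δ is a nonzero differential operator on R of order ≤ 1 that is homogeneous of degree −1. Thus in characteristic 2 the quadric cone admits a nonzero differential operator of negative degree. -/
open MvPolynomial

/-- The quadric cone over `𝔽₂ = ℤ/2ℤ`. -/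
noncomputable def quadricIdeal : Ideal (MvPolynomial (Fin 3) (ZMod 2)) :=
  Ideal.span {X 0 ^ 2 + X 1 * X 2}

/-- `R = 𝔽₂[x₀,x₁,x₂]/(x₀² + x₁x₂)`. -/
abbrev RQuad : Type := MvPolynomial (Fin 3) (ZMod 2) ⧸ quadricIdeal



lemma degree_sub_single_add {σ : Type*} [DecidableEq σ] (v : σ →₀ ℕ) (i : σ) (h : v i ≠ 0) :
    (v - Finsupp.single i 1).degree + 1 = v.degree := by
  have hv : (v - Finsupp.single i 1) + Finsupp.single i 1 = v := by
    ext j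
    rcases eq_or_ne j i with hj | hj
    · subst hj
      simp only [Finsupp.add_apply, Finsupp.tsub_apply, Finsupp.single_eq_same]
      omega
    · simp [Finsupp.single_apply, hj.symm, Ne.symm]
  have hs : (Finsupp.single i 1 : σ →₀ ℕ).degree = 1 := by
    simp [Finsupp.degree_eq_weight_one, Finsupp.weight_apply]
  calc (v - Finsupp.single i 1).degree + 1
      = ((v - Finsupp.single i 1) + Finsupp.single i 1).degree := by
        simp only [Finsupp.degree_eq_weight_one] at hs ⊢
        rw [map_add, hs]
    _ = v.degree := by rw [hv]

lemma pderiv_isHomogeneous {σ : Type*} {R : Type*} [CommRing R] [DecidableEq σ] (i : σ)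
    {p : MvPolynomial σ R} {n : ℕ} (h : p.IsHomogeneous (n + 1)) :
    (pderiv i p).IsHomogeneous n := by
  rw [p.as_sum, map_sum]
  apply MvPolynomial.IsHomogeneous.sum
  intro v hv
  rw [pderiv_monomial]
  by_cases hvi : v i = 0
  · rw [hvi]
    simp only [Nat.cast_zero, mul_zero, map_zero]
    exact isHomogeneous_zero _ _ _
  · apply isHomogeneous_monomial
    have hd : v.degree = n + 1 := by
      rw [Finsupp.degree_eq_weight_one]; exact h (MvPolynomial.mem_support_iff.mp hv)
    have := degree_sub_single_add v i hvi
    omega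

lemma pderiv_eq_zero_of_isHomogeneous_zero {σ : Type*} {R : Type*} [CommRing R] [DecidableEq σ]
    (i : σ) {p : MvPolynomial σ R} (h : p.IsHomogeneous 0) : pderiv i p = 0 := by
  rw [p.as_sum, map_sum]
  apply Finset.sum_eq_zero
  intro v hv
  have hd : v.degree = 0 := by
    rw [Finsupp.degree_eq_weight_one]; exact h (MvPolynomial.mem_support_iff.mp hv)
  rw [Finsupp.degree_eq_zero_iff] at hd
  simp [hd]

set_option maxHeartbeats 1000000 in
/-- over `k = ℤ/2ℤ`, the partial derivative `∂/∂x₀` maps the ideal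
`(x₀² + x₁x₂)` into itself, hence descends to a well-defined `k`-linear map
`δ : R → R` on `R = k[x₀,x₁,x₂]/(x₀² + x₁x₂)`; this `δ` is a nonzero differential
operator of order `≤ 1` that is homogeneous of degree `-1`.  Thus in characteristic `2`
the quadric cone admits a nonzero differential operator of negative degree. -/
theorem char_two_quadric_cone_has_negative_degree_diffop :
    (∀ f ∈ quadricIdeal, pderiv (0 : Fin 3) f ∈ quadricIdeal) ∧
    ∃ δ : RQuad →ₗ[ZMod 2] RQuad,
      (∀ f : MvPolynomial (Fin 3) (ZMod 2),
        δ (Ideal.Quotient.mk quadricIdeal f) =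
          Ideal.Quotient.mk quadricIdeal (pderiv (0 : Fin 3) f)) ∧
      δ ≠ 0 ∧ IsDiffOpOfOrder (ZMod 2) 1 δ ∧
      HomogeneousOfDegree (quotGrade (ZMod 2) quadricIdeal) δ (-1) := by

  classical
  have hq : pderiv (0 : Fin 3) ((X 0 ^ 2 + X 1 * X 2 : MvPolynomial (Fin 3) (ZMod 2))) = 0 := by
    have h2 : (2 : MvPolynomial (Fin 3) (ZMod 2)) = 0 := by
      have := CharP.cast_eq_zero (MvPolynomial (Fin 3) (ZMod 2)) 2
      simpa using this
    simp only [map_add, pderiv_pow, pderiv_mul, pderiv_X_self, pderiv_X_of_ne (by decide : (1:Fin 3) ≠ 0), pderiv_X_of_ne (by decide : (2:Fin 3) ≠ 0)]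
    rw [show ((2:ℕ) : MvPolynomial (Fin 3) (ZMod 2)) = 2 by norm_cast, h2]
    ring
  have hmem : ∀ f ∈ quadricIdeal, pderiv (0 : Fin 3) f ∈ quadricIdeal := by
    intro f hf
    rw [quadricIdeal, Ideal.mem_span_singleton] at hf ⊢
    obtain ⟨p, rfl⟩ := hf
    rw [pderiv_mul, hq, zero_mul, zero_add]
    exact Dvd.intro _ rfl
  refine ⟨hmem, ?_⟩
  -- the descended map
  set D : MvPolynomial (Fin 3) (ZMod 2) →ₗ[ZMod 2] RQuad :=
    (Ideal.Quotient.mkₐ (ZMod 2) quadricIdeal).toLinearMap ∘ₗ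
      (pderiv (0 : Fin 3)).toLinearMap with hD
  have hker : quadricIdeal.restrictScalars (ZMod 2) ≤ LinearMap.ker D := by
    intro f hf
    simp only [LinearMap.mem_ker, hD, LinearMap.coe_comp, Function.comp_apply,
      AlgHom.toLinearMap_apply, Derivation.coeFn_coe, Ideal.Quotient.mkₐ_eq_mk]
    rw [Ideal.Quotient.eq_zero_iff_mem]
    exact hmem f hf
  set δ : RQuad →ₗ[ZMod 2] RQuad :=
    (Submodule.liftQ (quadricIdeal.restrictScalars (ZMod 2)) D hker) ∘ₗ
      (Submodule.Quotient.restrictScalarsEquiv (ZMod 2) quadricIdeal).symm.toLinearMap with hδdef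
  have hδ : ∀ f : MvPolynomial (Fin 3) (ZMod 2),
      δ (Ideal.Quotient.mk quadricIdeal f) =
        Ideal.Quotient.mk quadricIdeal (pderiv (0 : Fin 3) f) := by
    intro f
    have h1 : (Ideal.Quotient.mk quadricIdeal f) = Submodule.Quotient.mk f := rfl
    simp only [hδdef, LinearMap.coe_comp, Function.comp_apply, LinearEquiv.coe_coe, h1,
      Submodule.Quotient.restrictScalarsEquiv_symm_mk, Submodule.liftQ_apply, hD,
      AlgHom.toLinearMap_apply, Derivation.coeFn_coe, Ideal.Quotient.mkₐ_eq_mk]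
  have hLeib : ∀ a b : RQuad, δ (a * b) = a * δ b + b * δ a := by
    intro a b
    obtain ⟨f, rfl⟩ := Ideal.Quotient.mk_surjective a
    obtain ⟨g, rfl⟩ := Ideal.Quotient.mk_surjective b
    rw [← map_mul, hδ, hδ, hδ, pderiv_mul, map_add, map_mul, map_mul]
    ring
  refine ⟨δ, hδ, ?_, ?_, ?_⟩
  · -- nonzero
    intro h0
    have h1 : δ (Ideal.Quotient.mk quadricIdeal (X 0)) = 1 := by
      rw [hδ]; simp
    rw [h0] at h1
    simp only [LinearMap.zero_apply] at h1
    have h2 : (1 : MvPolynomial (Fin 3) (ZMod 2)) ∈ quadricIdeal := by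
      rw [← Ideal.Quotient.eq_zero_iff_mem, map_one, ← h1]
    rw [quadricIdeal, Ideal.mem_span_singleton] at h2
    obtain ⟨p, hp⟩ := h2
    have := congrArg (aeval (fun _ : Fin 3 => (0 : ZMod 2))) hp
    simp at this
  · -- order ≤ 1
    intro r
    intro s t
    simp only [LinearMap.sub_apply, LinearMap.coe_comp, Function.comp_apply,
      LinearMap.mulLeft_apply]
    rw [show r * (s * t) = r * (s * t) from rfl, hLeib r (s * t), hLeib r t]
    ring
  · -- homogeneous of degree -1
    intro d r hr
    obtain ⟨p, hp, hpr⟩ := hr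
    have hmk : r = Ideal.Quotient.mk quadricIdeal p := by
      rw [← hpr]; simp [Ideal.Quotient.mkₐ_eq_mk]
    subst hmk
    have hp' : p.IsHomogeneous d := hp
    constructor
    · intro m hm
      have hd : d = m + 1 := by omega
      subst hd
      refine ⟨pderiv (0 : Fin 3) p, ?_, ?_⟩
      · exact pderiv_isHomogeneous _ hp'
      · rw [hδ]
        simp [quotGrade, Ideal.Quotient.mkₐ_eq_mk]
    · intro hneg
      have hd : d = 0 := by omega
      subst hd
      rw [hδ, pderiv_eq_zero_of_isHomogeneous_zero _ hp', map_zero]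
end
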